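/- For every unit i and every S ∈ S_i^β, ‖E[(1/n) Σ_{i' : N_i ∩ N_{i'} ≠ ∅} ω_i ω_{i'} X_{i'} ∏_{k∈S} Z_k]‖₂ ≤ (4 d_in d_out / n) · X_max · ((e d_in / β) · max{β², 1/(p(1−p))})^β. -/

import Mathlib

noncomputable section

namespace SNIPE

open Finset

/-- The collection `S_i^β` of subsets of the in-neighborhood of unit `i` of size at most `β`. -/
def Sb (n β : ℕ) (Nb : Fin n → Finset (Fin n)) (i : Fin n) : Finset (Finset (Fin n)) :=
  (Nb i).powerset.filter fun s => s.card ≤ β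

/-- `g(S) = ∏_{j∈S}(1-p_j) - ∏_{j∈S}(-p_j)`. -/
def gcoef {n : ℕ} (prob : Fin n → ℝ) (s : Finset (Fin n)) : ℝ :=
  (∏ j ∈ s, (1 - prob j)) - ∏ j ∈ s, (-prob j)

/-- The SNIPE weight `ω_i`, as a function of the treatment realization `z`. -/
def wt (n β : ℕ) (Nb : Fin n → Finset (Fin n)) (prob : Fin n → ℝ) (i : Fin n)
    (z : Fin n → ℝ) : ℝ :=
  ∑ s ∈ Sb n β Nb i, gcoef prob s * ∏ j ∈ s, (z j - prob j) / (prob j * (1 - prob j))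

/-- The β-order interaction potential-outcome model `Y_i(z) = ∑_{S∈S_i^β} α_{i,S} ∏_{j∈S} z_j`. -/
def Ypot (n β : ℕ) (Nb : Fin n → Finset (Fin n)) (α : Fin n → Finset (Fin n) → ℝ)
    (i : Fin n) (z : Fin n → ℝ) : ℝ :=
  ∑ s ∈ Sb n β Nb i, α i s * ∏ j ∈ s, z j

/-- The coefficient estimator `α̂_{i,S}`, where `Yval` is the observed outcome of unit `i`. -/
def alphaHat (n β : ℕ) (Nb : Fin n → Finset (Fin n)) (prob : Fin n → ℝ)
    (Yval : ℝ) (i : Fin n) (s : Finset (Fin n)) (z : Fin n → ℝ) : ℝ :=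
  Yval * (∏ j ∈ s, (-1 / prob j)) *
    ∑ u ∈ (Sb n β Nb i).filter (fun u => s ⊆ u), ∏ l ∈ u, (prob l - z l) / (1 - prob l)

/-- The ℓ2 norm of a finite real vector. -/
def l2 {d : ℕ} (v : Fin d → ℝ) : ℝ := Real.sqrt (∑ k, v k ^ 2)

/-- The covariance of two real random variables. -/
def covr {Ω : Type*} [MeasurableSpace Ω] (μ : MeasureTheory.Measure Ω) (f h : Ω → ℝ) : ℝ :=
  (∫ x, f x * h x ∂μ) - (∫ x, f x ∂μ) * ∫ x, h x ∂μ

/-- A randomized experiment on a population of `n` units joined by a directed interference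
network with all self-loops: treatments `Z_i` are mutually independent `Bernoulli(p_i)` random
variables with `p_i ∈ [p, 1-p]`, outcomes follow the `β`-order interaction model with
coefficients `α`, and each unit carries a deterministic covariate vector `X_i ∈ ℝ^{dX}`. -/
structure Setting (β dX : ℕ) (p : ℝ) where
  n : ℕ
  Ω : Type
  [mΩ : MeasurableSpace Ω]
  μ : MeasureTheory.Measure Ω
  isProb : MeasureTheory.IsProbabilityMeasure μ
  prob : Fin n → ℝ
  prob_mem : ∀ i, p ≤ prob i ∧ prob i ≤ 1 - p
  Z : Fin n → Ω → ℝ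
  Z_meas : ∀ i, Measurable (Z i)
  Z_indep : ProbabilityTheory.iIndepFun Z μ
  Z_range : ∀ i x, Z i x = 0 ∨ Z i x = 1
  Z_prob : ∀ i, μ (Z i ⁻¹' {1}) = ENNReal.ofReal (prob i)
  Nb : Fin n → Finset (Fin n)
  self_mem : ∀ i, i ∈ Nb i
  α : Fin n → Finset (Fin n) → ℝ
  X : Fin n → Fin dX → ℝ

attribute [instance] Setting.mΩ

open MeasureTheory ProbabilityTheory Filter Topology

namespace Setting

variable {β dX : ℕ} {p : ℝ}

/-- The SNIPE weight `ω_i` as a random variable. -/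
def w (St : Setting β dX p) (i : Fin St.n) (x : St.Ω) : ℝ :=
  wt St.n β St.Nb St.prob i fun j => St.Z j x

/-- The observed outcome `Y_i = Y_i(Z)`. -/
def Yo (St : Setting β dX p) (i : Fin St.n) (x : St.Ω) : ℝ :=
  Ypot St.n β St.Nb St.α i fun j => St.Z j x

/-- The total treatment effect `TTE = (1/n) ∑_i (Y_i(1) - Y_i(0))`. -/
def tte (St : Setting β dX p) : ℝ :=
  (St.n : ℝ)⁻¹ * ∑ i,
    (Ypot St.n β St.Nb St.α i (fun _ => 1) - Ypot St.n β St.Nb St.α i fun _ => 0)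

/-- The covariate-adjusted SNIPE estimator `TTÊ(θ) = (1/n) ∑_i ω_i (Y_i - θᵀ X_i)`. -/
def tteHat (St : Setting β dX p) (θ : Fin dX → ℝ) (x : St.Ω) : ℝ :=
  (St.n : ℝ)⁻¹ * ∑ i, St.w i x * (St.Yo i x - ∑ k, θ k * St.X i k)

/-- Expectation with respect to the design measure. -/
def E (St : Setting β dX p) (f : St.Ω → ℝ) : ℝ := ∫ x, f x ∂St.μ

/-- The units `i'` whose in-neighborhood intersects that of `i`. -/
def nbrs (St : Setting β dX p) (i : Fin St.n) : Finset (Fin St.n) :=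
  univ.filter fun i' => (St.Nb i ∩ St.Nb i').Nonempty

/-- The coefficient estimator `α̂_{i,S}` as a random variable. -/
def ahat (St : Setting β dX p) (i : Fin St.n) (s : Finset (Fin St.n)) (x : St.Ω) : ℝ :=
  alphaHat St.n β St.Nb St.prob (St.Yo i x) i s fun j => St.Z j x

/-- The Gram matrix `(1/n) ∑_i ω_i² X_i X_iᵀ` (a random matrix). -/
def regGramAt (St : Setting β dX p) (x : St.Ω) : Matrix (Fin dX) (Fin dX) ℝ :=
  Matrix.of fun k l : Fin dX => (St.n : ℝ)⁻¹ * ∑ i, St.w i x ^ 2 * St.X i k * St.X i l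

/-- `E[(1/n) ∑_i ω_i² X_i X_iᵀ]`. -/
def regGram (St : Setting β dX p) : Matrix (Fin dX) (Fin dX) ℝ :=
  Matrix.of fun k l : Fin dX =>
    St.E fun x => (St.n : ℝ)⁻¹ * ∑ i, St.w i x ^ 2 * St.X i k * St.X i l

/-- The regression-based adjustment coefficient estimator `θ̂_Reg`. -/
def thetaHatReg (St : Setting β dX p) (x : St.Ω) : Fin dX → ℝ :=
  Matrix.mulVec (St.regGramAt x)⁻¹
    fun k => (St.n : ℝ)⁻¹ * ∑ i, St.w i x ^ 2 * St.X i k * St.Yo i x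

/-- The population regression-based adjustment coefficient `θ_Reg`. -/
def thetaReg (St : Setting β dX p) : Fin dX → ℝ :=
  Matrix.mulVec St.regGram⁻¹
    fun k => St.E fun x => (St.n : ℝ)⁻¹ * ∑ i, St.w i x ^ 2 * St.X i k * St.Yo i x

/-- The matrix `G = E[(1/n²) ∑_i ∑_{i' : N_i ∩ N_{i'} ≠ ∅} ω_i ω_{i'} X_i X_{i'}ᵀ]`. -/
def Gmat (St : Setting β dX p) : Matrix (Fin dX) (Fin dX) ℝ :=
  Matrix.of fun k l : Fin dX => St.E fun x =>
    (((St.n : ℝ)) ^ 2)⁻¹ * ∑ i, ∑ i' ∈ St.nbrs i, St.w i x * St.w i' x * St.X i k * St.X i' l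

/-- `E[(1/n) ∑_{i' : N_i ∩ N_{i'} ≠ ∅} ω_i ω_{i'} X_{i'} ∏_{k∈S} Z_k]`. -/
def vimE (St : Setting β dX p) (i : Fin St.n) (s : Finset (Fin St.n)) (k : Fin dX) : ℝ :=
  St.E fun x =>
    (St.n : ℝ)⁻¹ * ∑ i' ∈ St.nbrs i, St.w i x * St.w i' x * St.X i' k * ∏ t ∈ s, St.Z t x

/-- The VIM adjustment coefficient estimator `θ̂_VIM`. -/
def thetaHatVIM (St : Setting β dX p) (x : St.Ω) : Fin dX → ℝ :=
  Matrix.mulVec St.Gmat⁻¹ fun k =>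
    (St.n : ℝ)⁻¹ * ∑ i, ∑ s ∈ Sb St.n β St.Nb i, St.ahat i s x * St.vimE i s k

/-- The population VIM adjustment coefficient `θ_VIM`. -/
def thetaVIM (St : Setting β dX p) : Fin dX → ℝ :=
  Matrix.mulVec St.Gmat⁻¹ fun k => St.E fun x =>
    (((St.n : ℝ)) ^ 2)⁻¹ * ∑ i, ∑ i' ∈ St.nbrs i, St.w i x * St.w i' x * St.X i k * St.Yo i' x

/-- The matrix `M` with `M_{ii'} = ∑_{S ∈ S_i^β ∩ S_{i'}^β} g(S)² ∏_{j∈S} 1/(p_j(1-p_j))`. -/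
def Mmat (St : Setting β dX p) : Matrix (Fin St.n) (Fin St.n) ℝ :=
  Matrix.of fun i i' : Fin St.n => ∑ s ∈ Sb St.n β St.Nb i ∩ Sb St.n β St.Nb i',
    gcoef St.prob s ^ 2 * ∏ j ∈ s, (St.prob j * (1 - St.prob j))⁻¹

/-- The matrix `(1/n) Xᵀ M X`. -/
def XtMX (St : Setting β dX p) : Matrix (Fin dX) (Fin dX) ℝ :=
  Matrix.of fun k l : Fin dX => (St.n : ℝ)⁻¹ * ∑ i, ∑ i', St.X i k * St.Mmat i i' * St.X i' l

/-- Potential outcome under the all-ones assignment. -/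
def Y1 (St : Setting β dX p) (i : Fin St.n) : ℝ := Ypot St.n β St.Nb St.α i fun _ => 1

/-- Potential outcome under the all-zeros assignment. -/
def Y0 (St : Setting β dX p) (i : Fin St.n) : ℝ := Ypot St.n β St.Nb St.α i fun _ => 0

/-- `S_XX = (1/n) ∑_i (X_i - X̄)(X_i - X̄)ᵀ`. -/
def SXX (St : Setting β dX p) : Matrix (Fin dX) (Fin dX) ℝ :=
  Matrix.of fun k l : Fin dX => (St.n : ℝ)⁻¹ * ∑ i,
    (St.X i k - (St.n : ℝ)⁻¹ * ∑ i', St.X i' k) * (St.X i l - (St.n : ℝ)⁻¹ * ∑ i', St.X i' l)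

/-- `S_XY(1) = (1/n) ∑_i (X_i - X̄)(Y_i(1) - Ȳ_1)`. -/
def SXY1 (St : Setting β dX p) : Fin dX → ℝ := fun k => (St.n : ℝ)⁻¹ * ∑ i,
  (St.X i k - (St.n : ℝ)⁻¹ * ∑ i', St.X i' k) * (St.Y1 i - (St.n : ℝ)⁻¹ * ∑ i', St.Y1 i')

/-- `S_XY(0) = (1/n) ∑_i (X_i - X̄)(Y_i(0) - Ȳ_0)`. -/
def SXY0 (St : Setting β dX p) : Fin dX → ℝ := fun k => (St.n : ℝ)⁻¹ * ∑ i,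
  (St.X i k - (St.n : ℝ)⁻¹ * ∑ i', St.X i' k) * (St.Y0 i - (St.n : ℝ)⁻¹ * ∑ i', St.Y0 i')

/-- `θ_Lin = (1-p₁) S_XX⁻¹ S_XY(1) + p₁ S_XX⁻¹ S_XY(0)`. -/
def thetaLin (St : Setting β dX p) (p1 : ℝ) : Fin dX → ℝ := fun k =>
  (1 - p1) * Matrix.mulVec St.SXX⁻¹ St.SXY1 k + p1 * Matrix.mulVec St.SXX⁻¹ St.SXY0 k

/-- The OLS slope coefficient of `Y` on `X` (regression with an intercept) within group `G`. -/
def olsSlope (St : Setting β dX p) (G : Finset (Fin St.n)) (x : St.Ω) : Fin dX → ℝ :=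
  Matrix.mulVec
    (Matrix.of fun k l : Fin dX =>
      ∑ i ∈ G, (St.X i k - (G.card : ℝ)⁻¹ * ∑ i' ∈ G, St.X i' k) *
               (St.X i l - (G.card : ℝ)⁻¹ * ∑ i' ∈ G, St.X i' l))⁻¹
    fun k => ∑ i ∈ G, (St.X i k - (G.card : ℝ)⁻¹ * ∑ i' ∈ G, St.X i' k) *
               (St.Yo i x - (G.card : ℝ)⁻¹ * ∑ i' ∈ G, St.Yo i' x)

/-- Lin's adjustment coefficient estimator
`θ̂_Lin = ((1/n)∑(1-Z_i)) θ̂_1 + ((1/n)∑ Z_i) θ̂_0`. -/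
def thetaHatLin (St : Setting β dX p) (x : St.Ω) : Fin dX → ℝ := fun k =>
  ((St.n : ℝ)⁻¹ * ∑ i, (1 - St.Z i x)) *
      St.olsSlope (univ.filter fun i => St.Z i x = 1) x k +
    ((St.n : ℝ)⁻¹ * ∑ i, St.Z i x) *
      St.olsSlope (univ.filter fun i => St.Z i x = 0) x k

/-- Assumption 3 (boundedness): `X_max ≤ C` and `Y_max ≤ C`. -/
def Assumption3 (St : Setting β dX p) (C : ℝ) : Prop :=
  (∀ i, (∑ k, |St.X i k|) ≤ C) ∧ ∀ i, (∑ s ∈ Sb St.n β St.Nb i, |St.α i s|) ≤ C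

/-- Assumption 4 (invertibility): the smallest eigenvalues of `(1/n) XᵀX` and `(1/n) XᵀMX`
are bounded below by `c`. -/
def Assumption4 (St : Setting β dX p) (c : ℝ) : Prop :=
  (∀ v : Fin dX → ℝ, c * (∑ k, v k ^ 2) ≤
      ∑ k, ∑ l, v k * ((St.n : ℝ)⁻¹ * ∑ i, St.X i k * St.X i l) * v l) ∧
    ∀ v : Fin dX → ℝ, c * (∑ k, v k ^ 2) ≤ ∑ k, ∑ l, v k * St.XtMX k l * v l

/-- All in-degrees and out-degrees of the interference network are at most `D`. -/
def degBdd (St : Setting β dX p) (D : ℕ) : Prop :=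
  (∀ i, (St.Nb i).card ≤ D) ∧ ∀ j, (univ.filter fun i => j ∈ St.Nb i).card ≤ D

end Setting

/-- A sequence of (vector-valued) random variables, over a sequence of experimental settings,
converges to zero in probability. -/
def convInProbToZero {β dX : ℕ} {p : ℝ} (S : ℕ → Setting β dX p)
    (f : ∀ m, (S m).Ω → Fin dX → ℝ) : Prop :=
  ∀ ε : ℝ, 0 < ε →
    Filter.Tendsto (fun m => (S m).μ {x | ε ≤ l2 (f m x)}) Filter.atTop (nhds (0 : ENNReal))

end SNIPE

open MeasureTheory ProbabilityTheory Filter Finset Topology SNIPE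

/-!
Write `ω_i = ∑_{T ∈ S_i^β} g(T) ∏_{j∈T} ζ_j` with `ζ_j = (Z_j - p_j)/(p_j(1-p_j))`. By independence
the monomials `∏_{j∈T} ζ_j` are orthogonal with `E[(∏_{j∈T} ζ_j)²] = ∏_{j∈T} 1/(p_j(1-p_j))`, and
`|g(T)| ≤ 1`, so `E[ω_i²] ≤ ∑_{k≤β} C(d_in,k) M^k` with `M = max(β², 1/(p(1-p)))`. As `M ≥ β²`,
this truncated exponential series is at most twice its last term, hence at most
`2 (e d_in M/β)^β`. By AM-GM, `|E[ω_i ω_{i'} ∏_{k∈S} Z_k]| ≤ (E[ω_i²] + E[ω_{i'}²])/2`, and at most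
`d_in d_out` units `i'` have `N_i ∩ N_{i'} ≠ ∅`.
-/

open scoped Nat

lemma Nat.factorial_le_factorial_mul_pow_sub {k b : ℕ} (h : k ≤ b) :
    b ! ≤ k ! * b ^ (b - k) := by
  have hdesc := Nat.factorial_mul_descFactorial (Nat.sub_le b k)
  rw [Nat.sub_sub_self h] at hdesc
  rw [← hdesc]
  exact Nat.mul_le_mul_left _ (Nat.descFactorial_le_pow b (b - k))

lemma Finset.sum_powerset_filter_card_le_apply_card {α M : Type*} [AddCommMonoid M]
    (s : Finset α) (b : ℕ) (f : ℕ → M) :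
    ∑ t ∈ s.powerset.filter (·.card ≤ b), f t.card
      = ∑ k ∈ range (b + 1), s.card.choose k • f k := by
  rw [← sum_fiberwise_of_maps_to (g := card) (t := range (b + 1))
    fun t ht => mem_range.2 (Nat.lt_succ_of_le (mem_filter.1 ht).2)]
  refine sum_congr rfl fun k hk => ?_
  have hfiber : (s.powerset.filter (·.card ≤ b)).filter (·.card = k) = s.powersetCard k := by
    ext t
    simp only [mem_filter, mem_powerset, mem_powersetCard]
    have := mem_range.1 hk
    constructor
    · rintro ⟨⟨hts, -⟩, htk⟩; exact ⟨hts, htk⟩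
    · rintro ⟨hts, rfl⟩; exact ⟨⟨hts, by omega⟩, rfl⟩
  rw [hfiber, sum_congr rfl fun t ht => by rw [(mem_powersetCard.1 ht).2], sum_const,
    card_powersetCard]

lemma pow_div_factorial_mul_pow_le {k b : ℕ} (hkb : k ≤ b) {x : ℝ} (hx : (b : ℝ) ^ 2 ≤ x) :
    x ^ k / k ! * (b : ℝ) ^ (b - k) ≤ x ^ b / b ! := by
  have hx0 : 0 ≤ x := (sq_nonneg _).trans hx
  have hfact : ((b ! : ℕ) : ℝ) ≤ k ! * (b : ℝ) ^ (b - k) := by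
    exact_mod_cast Nat.factorial_le_factorial_mul_pow_sub hkb
  rw [div_mul_eq_mul_div, div_le_div_iff₀ (by positivity) (by positivity)]
  calc x ^ k * (b : ℝ) ^ (b - k) * b !
      ≤ x ^ k * (b : ℝ) ^ (b - k) * (k ! * (b : ℝ) ^ (b - k)) := by gcongr
    _ = x ^ k * ((b : ℝ) ^ 2) ^ (b - k) * k ! := by ring
    _ ≤ x ^ k * x ^ (b - k) * k ! := by gcongr
    _ = x ^ b * k ! := by rw [← pow_add, Nat.add_sub_cancel' hkb]

lemma sum_range_pow_div_factorial_le {b : ℕ} (hb : 1 ≤ b) {x : ℝ} (hx : (b : ℝ) ^ 2 ≤ x) :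
    ∑ k ∈ range (b + 1), x ^ k / k ! ≤ 2 * (x ^ b / b !) := by
  have hb0 : (0 : ℝ) < b := by exact_mod_cast hb
  have hx0 : 0 ≤ x := (sq_nonneg _).trans hx
  -- every term before the last is at most `1/b` times the last one
  have hterm : ∀ k ∈ range b, x ^ k / k ! ≤ x ^ b / b ! / b := fun k hk => by
    have hkb := mem_range.1 hk
    rw [le_div_iff₀ hb0]
    calc x ^ k / k ! * b ≤ x ^ k / k ! * (b : ℝ) ^ (b - k) :=
          mul_le_mul_of_nonneg_left (le_self_pow₀ (by exact_mod_cast hb) (by omega))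
            (div_nonneg (pow_nonneg hx0 k) (by positivity))
      _ ≤ x ^ b / b ! := pow_div_factorial_mul_pow_le hkb.le hx
  calc ∑ k ∈ range (b + 1), x ^ k / k !
      ≤ ∑ _k ∈ range b, x ^ b / b ! / b + x ^ b / b ! := by
        rw [sum_range_succ]; exact add_le_add_left (sum_le_sum hterm) _
    _ = 2 * (x ^ b / b !) := by
        rw [sum_const, card_range, nsmul_eq_mul]; field_simp; ring

lemma pow_div_factorial_le_exp_one_mul_div_pow (b : ℕ) {x : ℝ} (hx : 0 ≤ x) :
    x ^ b / b ! ≤ (Real.exp 1 * x / b) ^ b := by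
  have hbb : (0 : ℝ) < (b : ℝ) ^ b := by exact_mod_cast Nat.pow_self_pos
  have hexp : (b : ℝ) ^ b / b ! ≤ Real.exp 1 ^ b := by
    rw [Real.exp_one_pow]; exact Real.pow_div_factorial_le_exp _ b.cast_nonneg b
  rw [div_pow, mul_pow, le_div_iff₀ hbb, div_mul_eq_mul_div, div_le_iff₀ (by positivity)]
  rw [div_le_iff₀ (by positivity)] at hexp
  calc x ^ b * (b : ℝ) ^ b ≤ x ^ b * (Real.exp 1 ^ b * b !) := by gcongr
    _ = _ := by ring

lemma sum_range_choose_mul_pow_le {d b : ℕ} (hd : 1 ≤ d) (hb : 1 ≤ b) {M : ℝ}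
    (hM : (b : ℝ) ^ 2 ≤ M) :
    ∑ k ∈ range (b + 1), (d.choose k : ℝ) * M ^ k ≤ 2 * (Real.exp 1 * d / b * M) ^ b := by
  have hM0 : 0 ≤ M := (sq_nonneg _).trans hM
  have hdM : (b : ℝ) ^ 2 ≤ d * M := hM.trans (le_mul_of_one_le_left hM0 (by exact_mod_cast hd))
  calc ∑ k ∈ range (b + 1), (d.choose k : ℝ) * M ^ k
      ≤ ∑ k ∈ range (b + 1), (d * M) ^ k / k ! := by
        gcongr with k
        rw [mul_pow, mul_div_right_comm]
        gcongr
        exact Nat.choose_le_pow_div k d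
    _ ≤ 2 * ((d * M) ^ b / b !) := sum_range_pow_div_factorial_le hb hdM
    _ ≤ 2 * (Real.exp 1 * d / b * M) ^ b := by
        rw [div_mul_eq_mul_div, mul_assoc]
        gcongr
        exact pow_div_factorial_le_exp_one_mul_div_pow b (by positivity)

lemma abs_integral_mul_mul_le_of_abs_le_one {Ω : Type*} [MeasurableSpace Ω] {μ : Measure Ω}
    {f g h : Ω → ℝ} (hf : Integrable (fun x => f x ^ 2) μ) (hg : Integrable (fun x => g x ^ 2) μ)
    (hh : ∀ x, |h x| ≤ 1) :
    |∫ x, f x * g x * h x ∂μ| ≤ (∫ x, f x ^ 2 ∂μ + ∫ x, g x ^ 2 ∂μ) / 2 := by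
  rw [← integral_add hf hg, ← integral_div (μ := μ) 2 (fun x => f x ^ 2 + g x ^ 2),
    ← Real.norm_eq_abs]
  refine norm_integral_le_of_norm_le ((hf.add hg).div_const 2) (ae_of_all _ fun x => ?_)
  rw [Real.norm_eq_abs, abs_mul, abs_mul]
  calc |f x| * |g x| * |h x| ≤ |f x| * |g x| := mul_le_of_le_one_right (by positivity) (hh x)
    _ ≤ _ := by nlinarith [two_mul_le_add_sq |f x| |g x|, sq_abs (f x), sq_abs (g x)]

namespace SNIPE

lemma l2_le_sum_abs {d : ℕ} (v : Fin d → ℝ) : l2 v ≤ ∑ k, |v k| := by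
  rw [l2, Real.sqrt_le_left (sum_nonneg fun k _ => abs_nonneg _)]
  simpa only [sq_abs] using sum_sq_le_sq_sum_of_nonneg fun k _ => abs_nonneg (v k)

lemma abs_gcoef_le_one {n : ℕ} {q : Fin n → ℝ} (hq : ∀ j, 0 ≤ q j ∧ q j ≤ 1)
    (S : Finset (Fin n)) : |gcoef q S| ≤ 1 := by
  induction S using Finset.cons_induction with
  | empty => simp [gcoef]
  | cons j S hj _ =>
    have hprod : ∀ c : Fin n → ℝ, (∀ k, |c k| ≤ 1) → |∏ k ∈ S, c k| ≤ 1 := fun c hc => by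
      rw [abs_prod]; exact prod_le_one (fun _ _ => abs_nonneg _) fun k _ => hc k
    have hA := hprod (fun k => 1 - q k) fun k => abs_le.2 ⟨by linarith [hq k], by linarith [hq k]⟩
    have hB := hprod (fun k => -q k) fun k => by
      rw [abs_neg, abs_of_nonneg (hq k).1]; exact (hq k).2
    obtain ⟨hq0, hq1⟩ := hq j
    -- `g(S ∪ {j})` is a convex combination of `∏_S (1 - q)` and `∏_S (-q)`
    rw [gcoef, prod_cons, prod_cons,
      show ∀ A B : ℝ, (1 - q j) * A - -q j * B = (1 - q j) * A + q j * B from fun A B => by ring]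
    calc _ ≤ (1 - q j) * |∏ k ∈ S, (1 - q k)| + q j * |∏ k ∈ S, -q k| := by
          refine (abs_add_le _ _).trans ?_
          rw [abs_mul, abs_mul, abs_of_nonneg (by linarith), abs_of_nonneg hq0]
      _ ≤ (1 - q j) * 1 + q j * 1 := by gcongr
      _ = 1 := by ring

def scaledDev (q z : ℝ) : ℝ := (z - q) / (q * (1 - q))

lemma measurable_wt (n β : ℕ) (Nb : Fin n → Finset (Fin n)) (prob : Fin n → ℝ) (i : Fin n) :
    Measurable (wt n β Nb prob i) := by
  unfold wt; fun_prop

namespace Setting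

variable {β dX : ℕ} {p : ℝ} (St : Setting β dX p)

lemma prob_pos (hp : 0 < p) (j : Fin St.n) : 0 < St.prob j :=
  hp.trans_le (St.prob_mem j).1

lemma prob_lt_one (hp : 0 < p) (j : Fin St.n) : St.prob j < 1 := by
  linarith [(St.prob_mem j).2]

lemma prob_mul_one_sub_pos (hp : 0 < p) (j : Fin St.n) : 0 < St.prob j * (1 - St.prob j) :=
  mul_pos (St.prob_pos hp j) (sub_pos.2 (St.prob_lt_one hp j))

lemma inv_prob_mul_one_sub_le (hp : 0 < p) {M : ℝ} (hpM : 1 / (p * (1 - p)) ≤ M)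
    (j : Fin St.n) : (St.prob j * (1 - St.prob j))⁻¹ ≤ M := by
  obtain ⟨h1, h2⟩ := St.prob_mem j
  have hp' : 0 < p * (1 - p) := mul_pos hp (by linarith [St.prob_pos hp j])
  rw [one_div] at hpM
  exact (inv_anti₀ hp' (by nlinarith)).trans hpM

/-- The treatment vector takes only the finitely many values `{0, 1}ⁿ`. -/
lemma integrable_comp_Z {F : (Fin St.n → ℝ) → ℝ} (hF : Measurable F) :
    Integrable (fun x => F fun j => St.Z j x) St.μ := by
  have := St.isProb
  refine .of_bound (hF.comp (measurable_pi_lambda _ St.Z_meas)).aestronglyMeasurable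
    (∑ z ∈ Fintype.piFinset fun _ => ({0, 1} : Finset ℝ), ‖F z‖) (ae_of_all _ fun x => ?_)
  refine single_le_sum (f := fun z => ‖F z‖) (fun _ _ => norm_nonneg _) ?_
  exact Fintype.mem_piFinset.2 fun j => by rcases St.Z_range j x with h | h <;> simp [h]

lemma integral_Z (hp : 0 ≤ p) (j : Fin St.n) : ∫ x, St.Z j x ∂St.μ = St.prob j := by
  have hZ : St.Z j = (St.Z j ⁻¹' {1}).indicator 1 := by
    funext x
    rcases St.Z_range j x with h | h <;> simp [h]
  rw [hZ, integral_indicator_one (St.Z_meas j (measurableSet_singleton 1)), measureReal_def,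
    St.Z_prob j, ENNReal.toReal_ofReal (hp.trans (St.prob_mem j).1)]

lemma integral_comp_Z (hp : 0 ≤ p) (f : ℝ → ℝ) (j : Fin St.n) :
    ∫ x, f (St.Z j x) ∂St.μ = (1 - St.prob j) * f 0 + St.prob j * f 1 := by
  have := St.isProb
  have hf : ∀ x, f (St.Z j x) = f 0 + (f 1 - f 0) * St.Z j x := fun x => by
    rcases St.Z_range j x with h | h <;> simp [h]
  have hZ : Integrable (St.Z j) St.μ := St.integrable_comp_Z (F := fun z => z j) (by fun_prop)
  simp_rw [hf]
  rw [integral_add (integrable_const _) (hZ.const_mul _), integral_const_mul, integral_const,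
    St.integral_Z hp, probReal_univ, one_smul]
  ring

lemma integral_scaledDev (hp : 0 < p) (j : Fin St.n) :
    ∫ x, scaledDev (St.prob j) (St.Z j x) ∂St.μ = 0 := by
  have := St.prob_pos hp j
  have := St.prob_lt_one hp j
  rw [St.integral_comp_Z hp.le, scaledDev, scaledDev]
  field_simp
  ring

lemma integral_scaledDev_mul_self (hp : 0 < p) (j : Fin St.n) :
    ∫ x, scaledDev (St.prob j) (St.Z j x) * scaledDev (St.prob j) (St.Z j x) ∂St.μ
      = (St.prob j * (1 - St.prob j))⁻¹ := by
  have := St.prob_pos hp j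
  have : 1 - St.prob j ≠ 0 := (sub_pos.2 (St.prob_lt_one hp j)).ne'
  rw [St.integral_comp_Z hp.le (fun z => scaledDev _ z * scaledDev _ z), scaledDev, scaledDev]
  field_simp
  ring

lemma w_eq_sum_prod_scaledDev (i : Fin St.n) (x : St.Ω) :
    St.w i x
      = ∑ S ∈ Sb St.n β St.Nb i, gcoef St.prob S * ∏ j ∈ S, scaledDev (St.prob j) (St.Z j x) :=
  rfl

/-- A coordinate in exactly one of `S`, `T` contributes an independent factor of mean zero. -/
lemma integral_prod_scaledDev_mul_prod_scaledDev (hp : 0 < p) (S T : Finset (Fin St.n)) :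
    ∫ x, (∏ j ∈ S, scaledDev (St.prob j) (St.Z j x)) * ∏ j ∈ T, scaledDev (St.prob j) (St.Z j x)
      ∂St.μ = if S = T then ∏ j ∈ S, (St.prob j * (1 - St.prob j))⁻¹ else 0 := by
  have := St.isProb
  set f : Fin St.n → ℝ → ℝ := fun j z =>
    (if j ∈ S then scaledDev (St.prob j) z else 1) * (if j ∈ T then scaledDev (St.prob j) z else 1)
  have hprod : ∀ x, (∏ j ∈ S, scaledDev (St.prob j) (St.Z j x)) *
      ∏ j ∈ T, scaledDev (St.prob j) (St.Z j x) = ∏ j, f j (St.Z j x) := fun x => by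
    simp only [f, prod_mul_distrib, Fintype.prod_ite_mem]
  have hf : ∀ j, Measurable (f j) := fun j => by
    unfold f scaledDev; apply Measurable.mul <;> split_ifs <;> fun_prop
  simp_rw [hprod]
  rw [St.Z_indep.integral_fun_prod_comp (fun j => (St.Z_meas j).aemeasurable)
    fun j => (hf j).aestronglyMeasurable]
  split_ifs with hST
  · subst hST
    rw [← Fintype.prod_ite_mem S]
    refine prod_congr rfl fun j _ => ?_
    by_cases hj : j ∈ S
    · simp only [f, hj, if_true]; exact St.integral_scaledDev_mul_self hp j
    · simp [f, hj]
  · obtain ⟨j, hj⟩ : ∃ j, ¬(j ∈ S ↔ j ∈ T) := by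
      by_contra! h; exact hST (Finset.ext h)
    refine prod_eq_zero (mem_univ j) ?_
    by_cases hjS : j ∈ S
    · simp only [f, hjS, show j ∉ T by tauto, if_true, if_false, mul_one]
      exact St.integral_scaledDev hp j
    · simp only [f, hjS, show j ∈ T by tauto, if_true, if_false, one_mul]
      exact St.integral_scaledDev hp j

lemma integral_w_sq (hp : 0 < p) (i : Fin St.n) :
    ∫ x, St.w i x ^ 2 ∂St.μ
      = ∑ S ∈ Sb St.n β St.Nb i,
          gcoef St.prob S ^ 2 * ∏ j ∈ S, (St.prob j * (1 - St.prob j))⁻¹ := by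
  have hint : ∀ S T : Finset (Fin St.n), Integrable (fun x =>
      (gcoef St.prob S * ∏ j ∈ S, scaledDev (St.prob j) (St.Z j x)) *
        (gcoef St.prob T * ∏ j ∈ T, scaledDev (St.prob j) (St.Z j x))) St.μ := fun S T =>
    St.integrable_comp_Z (F := fun z => (gcoef St.prob S * ∏ j ∈ S, scaledDev (St.prob j) (z j)) *
      (gcoef St.prob T * ∏ j ∈ T, scaledDev (St.prob j) (z j))) (by unfold scaledDev; fun_prop)
  simp_rw [w_eq_sum_prod_scaledDev, sq, sum_mul_sum]
  rw [integral_finsetSum _ fun S _ => integrable_finsetSum _ fun T _ => hint S T]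
  refine sum_congr rfl fun S hS => ?_
  rw [integral_finsetSum _ fun T _ => hint S T]
  simp_rw [mul_mul_mul_comm, integral_const_mul, St.integral_prod_scaledDev_mul_prod_scaledDev hp,
    mul_ite, mul_zero, sum_ite_eq, if_pos hS]

lemma gcoef_sq_mul_prod_inv_le (hp : 0 < p) {M : ℝ} (hpM : 1 / (p * (1 - p)) ≤ M)
    (S : Finset (Fin St.n)) :
    gcoef St.prob S ^ 2 * ∏ j ∈ S, (St.prob j * (1 - St.prob j))⁻¹ ≤ M ^ S.card := by
  have hv0 : ∀ j, 0 ≤ (St.prob j * (1 - St.prob j))⁻¹ := fun j =>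
    (inv_pos.2 (St.prob_mul_one_sub_pos hp j)).le
  have hg : gcoef St.prob S ^ 2 ≤ 1 := by
    rw [← sq_abs]
    exact pow_le_one₀ (abs_nonneg _) (abs_gcoef_le_one
      (fun j => ⟨(St.prob_pos hp j).le, (St.prob_lt_one hp j).le⟩) S)
  have hprod : ∏ j ∈ S, (St.prob j * (1 - St.prob j))⁻¹ ≤ M ^ S.card := by
    rw [← prod_const]
    exact prod_le_prod (fun j _ => hv0 j) fun j _ => St.inv_prob_mul_one_sub_le hp hpM j
  calc _ ≤ 1 * M ^ S.card := mul_le_mul hg hprod (prod_nonneg fun j _ => hv0 j) zero_le_one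
    _ = M ^ S.card := one_mul _

lemma integral_w_sq_le (hp : 0 < p) (hβ : 1 ≤ β) {i : Fin St.n} {din : ℕ}
    (hdin : (St.Nb i).card ≤ din) {M : ℝ} (hβM : (β : ℝ) ^ 2 ≤ M) (hpM : 1 / (p * (1 - p)) ≤ M) :
    ∫ x, St.w i x ^ 2 ∂St.μ ≤ 2 * (Real.exp 1 * din / β * M) ^ β := by
  have hM0 : 0 ≤ M := (sq_nonneg _).trans hβM
  have hd : 1 ≤ din := (card_pos.2 ⟨i, St.self_mem i⟩).trans_le hdin
  calc ∫ x, St.w i x ^ 2 ∂St.μ ≤ ∑ S ∈ Sb St.n β St.Nb i, M ^ S.card := by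
        rw [St.integral_w_sq hp]
        exact sum_le_sum fun S _ => St.gcoef_sq_mul_prod_inv_le hp hpM S
    _ = ∑ k ∈ range (β + 1), ((St.Nb i).card.choose k : ℝ) * M ^ k := by
        rw [Sb, sum_powerset_filter_card_le_apply_card]; simp only [nsmul_eq_mul]
    _ ≤ ∑ k ∈ range (β + 1), (din.choose k : ℝ) * M ^ k := by gcongr
    _ ≤ _ := sum_range_choose_mul_pow_le hd hβ hβM

lemma abs_vimE_le {B : ℝ} (hB : ∀ j, ∫ x, St.w j x ^ 2 ∂St.μ ≤ B) (i : Fin St.n)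
    (s : Finset (Fin St.n)) (k : Fin dX) :
    |St.vimE i s k| ≤ (St.n : ℝ)⁻¹ * ∑ i' ∈ St.nbrs i, |St.X i' k| * B := by
  have hw := measurable_wt St.n β St.Nb St.prob
  have hw2 : ∀ j, Integrable (fun x => St.w j x ^ 2) St.μ := fun j =>
    St.integrable_comp_Z (F := fun z => wt St.n β St.Nb St.prob j z ^ 2) ((hw j).pow_const 2)
  have hZ : ∀ x, |∏ t ∈ s, St.Z t x| ≤ 1 := fun x => by
    rw [abs_prod]
    exact prod_le_one (fun _ _ => abs_nonneg _) fun t _ => by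
      rcases St.Z_range t x with h | h <;> simp [h]
  have hterm : ∀ i', Integrable (fun x => St.X i' k *
      (St.w i x * St.w i' x * ∏ t ∈ s, St.Z t x)) St.μ := fun i' =>
    St.integrable_comp_Z (F := fun z => St.X i' k *
      (wt St.n β St.Nb St.prob i z * wt St.n β St.Nb St.prob i' z * ∏ t ∈ s, z t))
      (by have := hw i; have := hw i'; fun_prop)
  have hvimE : St.vimE i s k = (St.n : ℝ)⁻¹ * ∑ i' ∈ St.nbrs i,
      St.X i' k * ∫ x, St.w i x * St.w i' x * ∏ t ∈ s, St.Z t x ∂St.μ := by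
    simp_rw [vimE, E, ← integral_const_mul, mul_right_comm _ (St.X _ k), mul_comm _ (St.X _ k)]
    rw [integral_const_mul, integral_finsetSum _ fun i' _ => hterm i']
  rw [hvimE, abs_mul, abs_inv, Nat.abs_cast]
  gcongr
  refine (abs_sum_le_sum_abs _ _).trans (sum_le_sum fun i' _ => ?_)
  rw [abs_mul]
  gcongr
  linarith [abs_integral_mul_mul_le_of_abs_le_one (hw2 i) (hw2 i') hZ, hB i, hB i']

lemma card_nbrs_le {i : Fin St.n} {din dout : ℕ} (hdin : (St.Nb i).card ≤ din)
    (hdout : ∀ j, (univ.filter fun i => j ∈ St.Nb i).card ≤ dout) :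
    (St.nbrs i).card ≤ din * dout :=
  calc (St.nbrs i).card
      ≤ ((St.Nb i).biUnion fun j => univ.filter fun i' => j ∈ St.Nb i').card :=
        card_le_card fun i' hi' => by
          obtain ⟨j, hj⟩ := (mem_filter.1 hi').2
          rw [mem_inter] at hj
          exact mem_biUnion.2 ⟨j, hj.1, mem_filter.2 ⟨mem_univ _, hj.2⟩⟩
    _ ≤ (St.Nb i).card * dout := card_biUnion_le_card_mul _ _ _ fun j _ => hdout j
    _ ≤ din * dout := Nat.mul_le_mul_right _ hdin

lemma l2_vimE_le {B : ℝ} (hB : ∀ j, ∫ x, St.w j x ^ 2 ∂St.μ ≤ B) {i : Fin St.n} {din dout : ℕ}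
    (hdin : (St.Nb i).card ≤ din) (hdout : ∀ j, (univ.filter fun i => j ∈ St.Nb i).card ≤ dout)
    {Xmax : ℝ} (hXmax : ∀ i, ∑ k, |St.X i k| ≤ Xmax) (s : Finset (Fin St.n)) :
    l2 (fun k => St.vimE i s k) ≤ (St.n : ℝ)⁻¹ * B * (din * dout * Xmax) := by
  have hB0 : 0 ≤ B := (integral_nonneg fun x => sq_nonneg (St.w i x)).trans (hB i)
  have hX : 0 ≤ Xmax := (sum_nonneg fun k _ => abs_nonneg (St.X i k)).trans (hXmax i)
  have hnbrs : ((St.nbrs i).card : ℝ) ≤ din * dout := by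
    exact_mod_cast St.card_nbrs_le hdin hdout
  calc l2 (fun k => St.vimE i s k) ≤ ∑ k, |St.vimE i s k| := l2_le_sum_abs _
    _ ≤ ∑ k, (St.n : ℝ)⁻¹ * ∑ i' ∈ St.nbrs i, |St.X i' k| * B :=
        sum_le_sum fun k _ => St.abs_vimE_le hB i s k
    _ = (St.n : ℝ)⁻¹ * B * ∑ i' ∈ St.nbrs i, ∑ k, |St.X i' k| := by
        simp_rw [← mul_sum, ← sum_mul, sum_comm (s := univ)]; ring
    _ ≤ (St.n : ℝ)⁻¹ * B * ((St.nbrs i).card * Xmax) := by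
        gcongr
        exact (sum_le_card_nsmul _ _ _ fun i' _ => hXmax i').trans_eq (nsmul_eq_mul _ _)
    _ ≤ (St.n : ℝ)⁻¹ * B * (din * dout * Xmax) := by gcongr

end Setting

end SNIPE

theorem statement_6_general (β dX : ℕ) (hβ : 1 ≤ β) (p : ℝ) (hp : 0 < p)
    (St : SNIPE.Setting β dX p)
    (din dout : ℕ)
    (hdin : ∀ i, (St.Nb i).card ≤ din)
    (hdout : ∀ j, (Finset.univ.filter fun i => j ∈ St.Nb i).card ≤ dout)
    (Xmax : ℝ) (hXmax : ∀ i, (∑ k, |St.X i k|) ≤ Xmax)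
    (i : Fin St.n) (s : Finset (Fin St.n)) :
    SNIPE.l2 (fun k => St.vimE i s k) ≤
      4 * din * dout / St.n * Xmax *
        (Real.exp 1 * din / β * max ((β : ℝ) ^ 2) (1 / (p * (1 - p)))) ^ β := by
  set P := (Real.exp 1 * din / β * max ((β : ℝ) ^ 2) (1 / (p * (1 - p)))) ^ β
  have hP : 0 ≤ P :=
    pow_nonneg (mul_nonneg (by positivity) ((sq_nonneg _).trans (le_max_left _ _))) β
  have hX : 0 ≤ Xmax := (sum_nonneg fun k _ => abs_nonneg (St.X i k)).trans (hXmax i)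
  calc SNIPE.l2 (fun k => St.vimE i s k) ≤ (St.n : ℝ)⁻¹ * (2 * P) * (din * dout * Xmax) :=
        St.l2_vimE_le (fun j => St.integral_w_sq_le hp hβ (hdin j) (le_max_left _ _)
          (le_max_right _ _)) (hdin i) hdout hXmax s
    _ ≤ 4 * din * dout / St.n * Xmax * P := by
        have : 0 ≤ (St.n : ℝ)⁻¹ * (din * dout * Xmax * P) := by positivity
        rw [div_eq_mul_inv]
        linarith

/-- Lemma 2: for every unit `i` and every `S ∈ S_i^β`,
`‖E[(1/n) ∑_(i' : N_i ∩ N_i' ≠ ∅) ω_i ω_i' X_i' ∏_(k∈S) Z_k]‖₂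
≤ (4 d_in d_out/n) X_max ((e d_in/β) max(β², 1/(p(1-p))))^β`. -/
theorem statement_6 (β dX : ℕ) (hβ : 1 ≤ β) (p : ℝ) (hp : 0 < p) (hp' : p ≤ 1 / 2)
    (St : SNIPE.Setting β dX p) (hn : 0 < St.n)
    (din dout : ℕ)
    (hdin : ∀ i, (St.Nb i).card ≤ din)
    (hdout : ∀ j, (Finset.univ.filter fun i => j ∈ St.Nb i).card ≤ dout)
    (Xmax : ℝ) (hXmax : ∀ i, (∑ k, |St.X i k|) ≤ Xmax)
    (i : Fin St.n) (s : Finset (Fin St.n)) (hs : s ∈ SNIPE.Sb St.n β St.Nb i) :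
    SNIPE.l2 (fun k => St.vimE i s k) ≤
      4 * din * dout / St.n * Xmax *
        (Real.exp 1 * din / β * max ((β : ℝ) ^ 2) (1 / (p * (1 - p)))) ^ β :=
  statement_6_general β dX hβ p hp St din dout hdin hdout Xmax hXmax i s
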